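/- Define a Lag system with context length 2 over pairs (σ, c) ∈ Σ × {blank, L, l} by the rules: (x,blank)(y,blank) → (x,blank), (x,blank)(y,L) → (x,l), (x,L)(y,blank) → (x,blank), for all x, y ∈ Σ. Starting from the string (s₁,blank)...(s_{n-2},blank)(s_{n-1},L)(sₙ,blank) with n ≥ 3, after n−1 iterations the memory string is (sₙ,blank)(s₁,blank)...(s_{n-2},l)(s_{n-1},blank). -/
import Mathlib


namespace Stmt3

/-- Control symbols: blank, initiating token `L`, terminating token `l`. -/
inductive Ctl | blank | L | l
deriving DecidableEq

/-- The rule set `R_left`, acting on control coordinates: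
`blank·blank → blank`, `blank·L → l`, `L·blank → blank`. -/
def rc : Ctl → Ctl → Option Ctl
  | .blank, .blank => some .blank
  | .blank, .L => some .l
  | .L, .blank => some .blank
  | _, _ => none

/-- One Lag iteration with context length 2. -/
def step {α : Type*} (r : Ctl → Ctl → Option Ctl) :
    List (α × Ctl) → Option (List (α × Ctl))
  | (x, a) :: (y, b) :: rest => (r a b).map fun c => (y, b) :: rest ++ [(x, c)]
  | _ => none

/-- `k` iterations of the Lag system. -/
def iterL {α : Type*} (r : Ctl → Ctl → Option Ctl) :
    ℕ → List (α × Ctl) → Option (List (α × Ctl))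
  | 0, s => some s
  | k + 1, s => (step r s).bind (iterL r k)

end Stmt3

open Stmt3

private lemma iterL_add {α : Type*} (r : Ctl → Ctl → Option Ctl) (a b : ℕ)
    (s : List (α × Ctl)) :
    iterL r (a + b) s = (iterL r a s).bind (iterL r b) := by
  induction a generalizing s with
  | zero => simp [iterL]
  | succ k ih =>
    have : k + 1 + b = (k + b) + 1 := by omega
    rw [this]
    show (step r s).bind (iterL r (k + b)) = ((step r s).bind (iterL r k)).bind (iterL r b)
    cases step r s with
    | none => rfl
    | some t => simpa using ih t

private lemma rot {α : Type*} (b : List (α × Ctl)) (hb : ∀ p ∈ b, p.2 = Ctl.blank)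
    (y : α) (c : List (α × Ctl)) :
    iterL rc b.length (b ++ (y, Ctl.blank) :: c) = some ((y, Ctl.blank) :: c ++ b) := by
  induction b generalizing y c with
  | nil => simp [iterL]
  | cons p b' ih =>
    obtain ⟨x, a⟩ := p
    have ha : a = Ctl.blank := hb (x, a) (by simp)
    subst ha
    have hb' : ∀ p ∈ b', p.2 = Ctl.blank := fun p hp => hb p (by simp [hp])
    cases b' with
    | nil =>
      simp [iterL, step, rc]
    | cons q b'' =>
      obtain ⟨z, az⟩ := q
      have haz : az = Ctl.blank := hb' (z, az) (by simp)
      subst haz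
      show (step rc _).bind _ = _
      rw [show ((x, Ctl.blank) :: (z, Ctl.blank) :: b'' ++ (y, Ctl.blank) :: c)
            = (x, Ctl.blank) :: (z, Ctl.blank) :: (b'' ++ (y, Ctl.blank) :: c) from rfl]
      rw [show step rc ((x, Ctl.blank) :: (z, Ctl.blank) :: (b'' ++ (y, Ctl.blank) :: c))
            = some ((z, Ctl.blank) :: (b'' ++ (y, Ctl.blank) :: c) ++ [(x, Ctl.blank)])
          from rfl]
      rw [Option.bind_some]
      have heq : (z, Ctl.blank) :: (b'' ++ (y, Ctl.blank) :: c) ++ [(x, Ctl.blank)]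
          = ((z, Ctl.blank) :: b'') ++ (y, Ctl.blank) :: (c ++ [(x, Ctl.blank)]) := by
        simp
      rw [heq, ih hb' y (c ++ [(x, Ctl.blank)])]
      simp

private lemma lag_main {α : Type*} (d : List (α × Ctl)) (hd : ∀ p ∈ d, p.2 = Ctl.blank)
    (x y z : α) :
    iterL rc (d.length + 2) (d ++ [(x, Ctl.blank), (y, Ctl.L), (z, Ctl.blank)]) =
      some ((z, Ctl.blank) :: (d ++ [(x, Ctl.l), (y, Ctl.blank)])) := by
  rw [iterL_add, rot d hd x [(y, Ctl.L), (z, Ctl.blank)]]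
  rw [Option.bind_some]
  show iterL rc 2 ((x, Ctl.blank) :: (y, Ctl.L) :: (z, Ctl.blank) :: d) = _
  simp [iterL, step, rc]

open Stmt3 in
/-- Starting from `(s₁,blank)...(s_{n-2},blank)(s_{n-1},L)(sₙ,blank)` with `n ≥ 3`,
after `n−1` iterations the memory string is
`(sₙ,blank)(s₁,blank)...(s_{n-2},l)(s_{n-1},blank)`. -/
theorem stmt3 {α : Type*} (n : ℕ) (hn : 3 ≤ n) (s : Fin n → α) :
    iterL rc (n - 1)
      (List.ofFn fun i : Fin n => (s i, if i.val = n - 2 then Ctl.L else Ctl.blank)) =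
    some (List.ofFn fun i : Fin n =>
      (s ⟨(i.val + (n - 1)) % n, Nat.mod_lt _ (by omega)⟩,
        if i.val = n - 2 then Ctl.l else Ctl.blank)) := by
  set d : List (α × Ctl) :=
    List.ofFn (fun j : Fin (n - 3) => (s ⟨j.val, by omega⟩, Ctl.blank)) with hd_def
  have hd : ∀ p ∈ d, p.2 = Ctl.blank := by
    intro p hp
    rw [hd_def, List.mem_ofFn] at hp
    obtain ⟨j, rfl⟩ := hp
    rfl
  have hlen : d.length = n - 3 := by simp [hd_def]
  have hinit :
      (List.ofFn fun i : Fin n => (s i, if i.val = n - 2 then Ctl.L else Ctl.blank))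
        = d ++ [(s ⟨n - 3, by omega⟩, Ctl.blank), (s ⟨n - 2, by omega⟩, Ctl.L),
            (s ⟨n - 1, by omega⟩, Ctl.blank)] := by
    apply List.ext_getElem
    · simp [hd_def]; omega
    · intro i h1 h2
      have hin : i < n := by simpa using h1
      simp only [List.getElem_ofFn]
      rcases lt_or_ge i (n - 3) with hi | hi
      · rw [List.getElem_append_left (by omega : i < d.length)]
        simp only [hd_def, List.getElem_ofFn]
        have : i ≠ n - 2 := by omega
        simp [this]
      · rw [List.getElem_append_right (by omega : d.length ≤ i)]
        have hcases : i = n - 3 ∨ i = n - 2 ∨ i = n - 1 := by omega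
        rcases hcases with hi' | hi' | hi'
        · subst hi'
          simp only [show n - 3 - d.length = 0 from by omega, List.getElem_cons_zero]
          have : n - 3 ≠ n - 2 := by omega
          simp [this]
        · subst hi'
          simp only [show n - 2 - d.length = 1 from by omega, List.getElem_cons_succ,
            List.getElem_cons_zero]
          simp
        · subst hi'
          simp only [show n - 1 - d.length = 2 from by omega, List.getElem_cons_succ,
            List.getElem_cons_zero]
          have : n - 1 ≠ n - 2 := by omega
          simp [this]
  have hmod : ∀ i : ℕ, 1 ≤ i → i < n → (i + (n - 1)) % n = i - 1 := by
    intro i hh1 hh2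
    rw [show i + (n - 1) = (i - 1) + n from by omega, Nat.add_mod_right,
      Nat.mod_eq_of_lt (by omega)]
  have hfin :
      ((s ⟨n - 1, by omega⟩, Ctl.blank) :: (d ++ [(s ⟨n - 3, by omega⟩, Ctl.l),
          (s ⟨n - 2, by omega⟩, Ctl.blank)]))
        = List.ofFn (fun i : Fin n =>
            (s ⟨(i.val + (n - 1)) % n, Nat.mod_lt _ (by omega)⟩,
              if i.val = n - 2 then Ctl.l else Ctl.blank)) := by
    apply List.ext_getElem
    · simp [hd_def]; omega
    · intro i h1 h2
      have hin : i < n := by simpa using h2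
      simp only [List.getElem_ofFn]
      cases i with
      | zero =>
        simp only [List.getElem_cons_zero]
        have hm0 : (0 + (n - 1)) % n = n - 1 := by
          rw [Nat.zero_add, Nat.mod_eq_of_lt (by omega)]
        have hne : (0 : ℕ) ≠ n - 2 := by omega
        simp only [hne, if_false]
        congr 1
        exact congrArg s (Fin.ext hm0.symm)
      | succ j =>
        rw [List.getElem_cons_succ]
        have hm := hmod (j + 1) (by omega) hin
        have hne0 : j + 1 ≠ 0 := by omega
        rcases lt_or_ge j (n - 3) with hj | hj
        · rw [List.getElem_append_left (by omega : j < d.length)]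
          simp only [hd_def, List.getElem_ofFn]
          have hne : j + 1 ≠ n - 2 := by omega
          simp only [hne, if_false]
          congr 1
          exact congrArg s (Fin.ext (by simp [hm]))
        · rw [List.getElem_append_right (by omega : d.length ≤ j)]
          have hcases : j + 1 = n - 2 ∨ j + 1 = n - 1 := by omega
          rcases hcases with hj' | hj'
          · simp only [show j - d.length = 0 from by omega, List.getElem_cons_zero, hj',
              if_pos rfl]
            congr 1
            refine congrArg s (Fin.ext ?_)
            show n - 3 = (n - 2 + (n - 1)) % n
            rw [hmod (n - 2) (by omega) (by omega)]
            omega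
          · simp only [show j - d.length = 1 from by omega, List.getElem_cons_succ,
              List.getElem_cons_zero, hj']
            have hne : n - 1 ≠ n - 2 := by omega
            simp only [hne, if_false]
            congr 1
            refine congrArg s (Fin.ext ?_)
            show n - 2 = (n - 1 + (n - 1)) % n
            rw [hmod (n - 1) (by omega) (by omega)]
            omega
  rw [hinit, ← hfin]
  have hmain := lag_main d hd (s ⟨n - 3, by omega⟩) (s ⟨n - 2, by omega⟩) (s ⟨n - 1, by omega⟩)
  have hcount : n - 1 = d.length + 2 := by omega
  rw [← hcount] at hmain
  exact hmain
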